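/- Let T be a string of length t and let k ≥ 0 be an integer. Suppose u₁ ≤ u₂ are both lengths of borders of T with t ≤ 2^{k+1}·u_i and 2^k·u_i ≤ t for i = 1, 2 (i.e. both lie in the interval [t/2^{k+1}, t/2^k]). If the length-u₂ prefix of T is a cover of T, then the length-u₁ prefix of T is also a cover of T. -/

import Mathlib

/-- `C` occurs at position `p` in `T`. -/
def Occurs {α : Type*} (C T : List α) (p : ℕ) : Prop :=
  p + C.length ≤ T.length ∧ ∀ i < C.length, T[p + i]? = C[i]?

/-- `C` is a cover of `T`. -/
def IsCover {α : Type*} (C T : List α) : Prop :=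
  ∀ i < T.length, ∃ p, Occurs C T p ∧ p ≤ i ∧ i < p + C.length

/-- `T` has a border of length `u`: the length-`u` prefix equals the length-`u` suffix. -/
def HasBorder {α : Type*} (T : List α) (u : ℕ) : Prop :=
  u ≤ T.length ∧ T.take u = T.drop (T.length - u)

/-!
The two bounds on `|T|` give `u₂ ≤ 2 u₁`. As both are border lengths of `T`, the
`u₁`-prefix is a border of the `u₂`-prefix, and a border at least half as long as a
cover is again a cover.
-/

section

variable {α : Type*}

theorem Occurs.take {C T : List α} {p : ℕ} (h : Occurs C T p) (m : ℕ) :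
    Occurs (C.take m) T p := by
  refine ⟨by grind [Occurs], fun i hi => ?_⟩
  rw [List.length_take] at hi
  rw [h.2 i (by omega), List.getElem?_take_of_lt (by omega)]

theorem Occurs.drop {C T : List α} {p m : ℕ} (h : Occurs C T p) (hm : m ≤ C.length) :
    Occurs (C.drop m) T (p + m) := by
  refine ⟨by grind [Occurs], fun i hi => ?_⟩
  rw [List.length_drop] at hi
  rw [List.getElem?_drop, ← h.2 (m + i) (by omega), Nat.add_assoc]

theorem HasBorder.getElem?_sub_add {T : List α} {u i : ℕ} (h : HasBorder T u) (hi : i < u) :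
    T[T.length - u + i]? = T[i]? := by
  simpa [List.getElem?_take_of_lt hi, List.getElem?_drop] using
    (congrArg (fun l => l[i]?) h.2).symm

theorem HasBorder.take_of_le {T : List α} {u v : ℕ} (hu : HasBorder T u) (hv : HasBorder T v)
    (huv : u ≤ v) : HasBorder (T.take v) u := by
  have hvT := hv.1
  refine ⟨by simp [hvT, huv], List.ext_getElem? fun i => ?_⟩
  rw [List.take_take, min_eq_left huv, List.length_take, min_eq_left hvT, List.getElem?_drop]
  by_cases hi : i < u
  · rw [List.getElem?_take_of_lt hi, List.getElem?_take_of_lt (by omega), ← hu.getElem?_sub_add hi,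
      ← hv.getElem?_sub_add (i := v - u + i) (by omega)]
    congr 1
    omega
  · rw [List.getElem?_take_eq_none (by omega), List.getElem?_take_eq_none (by omega)]

/-- An occurrence of `C` at `p` yields occurrences of its border at `p` and at
`p + |C| - u`, which together span the occurrence of `C` since `|C| ≤ 2u`. -/
theorem IsCover.take_of_hasBorder {C T : List α} {u : ℕ} (hC : IsCover C T)
    (hb : HasBorder C u) (hu : C.length ≤ 2 * u) : IsCover (C.take u) T := by
  have hlen : (C.take u).length = u := List.length_take_of_le hb.1
  intro i hi
  obtain ⟨p, hocc, hpi, hip⟩ := hC i hi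
  by_cases hleft : i < p + u
  · exact ⟨p, hocc.take u, hpi, by omega⟩
  · exact ⟨p + (C.length - u), hb.2 ▸ hocc.drop (Nat.sub_le _ _), by omega, by omega⟩

theorem le_two_mul_of_pow_mul_le {t k u₁ u₂ : ℕ} (h₁ : t ≤ 2 ^ (k + 1) * u₁)
    (h₂ : 2 ^ k * u₂ ≤ t) : u₂ ≤ 2 * u₁ :=
  Nat.le_of_mul_le_mul_left (by rw [← mul_assoc, ← pow_succ]; omega) (Nat.two_pow_pos k)

end

theorem stmt_10_general {α : Type*} (T : List α) (k u₁ u₂ : ℕ) (h12 : u₁ ≤ u₂)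
    (hb1 : HasBorder T u₁) (hb2 : HasBorder T u₂)
    (h1a : T.length ≤ 2 ^ (k + 1) * u₁)
    (h2b : 2 ^ k * u₂ ≤ T.length)
    (hcov : IsCover (T.take u₂) T) :
    IsCover (T.take u₁) T := by
  have hu : (T.take u₂).length ≤ 2 * u₁ := by
    rw [List.length_take_of_le hb2.1]
    exact le_two_mul_of_pow_mul_le h1a h2b
  simpa [List.take_take, min_eq_left h12] using
    hcov.take_of_hasBorder (hb1.take_of_le hb2 h12) hu

/-- If `u₁ ≤ u₂` are both lengths of borders of `T` lying in the interval
`[t/2^{k+1}, t/2^k]` and the length-`u₂` prefix is a cover of `T`,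
then the length-`u₁` prefix is also a cover of `T`. -/
theorem stmt_10 {α : Type*} (T : List α) (k u₁ u₂ : ℕ) (h12 : u₁ ≤ u₂)
    (hb1 : HasBorder T u₁) (hb2 : HasBorder T u₂)
    (h1a : T.length ≤ 2 ^ (k + 1) * u₁) (h1b : 2 ^ k * u₁ ≤ T.length)
    (h2a : T.length ≤ 2 ^ (k + 1) * u₂) (h2b : 2 ^ k * u₂ ≤ T.length)
    (hcov : IsCover (T.take u₂) T) :
    IsCover (T.take u₁) T :=
  stmt_10_general T k u₁ u₂ h12 hb1 hb2 h1a h2b hcov
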